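/- arXiv:1802.02741 — 2 statements merged into one kernel-verified Lean document; each statement's English description precedes it below -/
import Mathlib

section
/- Let U ⊂ V be a k-dimensional subspace of a Euclidean space V, let E ∈ Gr(1,V) be a line not contained in U^⊥, and set ν(E) = (E + U^⊥) ∩ U. Then for any line L ⊂ U one has cos(E, L) = cos(E, U) · cos(ν(E), L), where cos(E,F) for a line E and a subspace F denotes the ratio of the length of the orthogonal projection onto F of a unit vector spanning E. -/
theorem norm_map_eq_norm_mul_norm_map_inv_norm_smul {E F : Type*} [NormedAddCommGroup E]
    [NormedSpace ℝ E] [SeminormedAddCommGroup F] [NormedSpace ℝ F] (f : E →ₗ[ℝ] F) (v : E) :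
    ‖f v‖ = ‖v‖ * ‖f (‖v‖⁻¹ • v)‖ := by
  rcases eq_or_ne v 0 with rfl | hv
  · simp
  · rw [map_smul, norm_smul, norm_inv, norm_norm, mul_inv_cancel_left₀ (norm_ne_zero_iff.mpr hv)]

theorem stmt9_general {V : Type*} [NormedAddCommGroup V] [InnerProductSpace ℝ V]
    [FiniteDimensional ℝ V] (U : Submodule ℝ V) (e l : V)
    (hlU : l ∈ U) :
    ‖(Submodule.orthogonalProjectionOnto (ℝ ∙ l) e : V)‖ =
      ‖(Submodule.orthogonalProjectionOnto U e : V)‖ *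
        ‖(Submodule.orthogonalProjectionOnto (ℝ ∙ l)
            (‖(Submodule.orthogonalProjectionOnto U e : V)‖⁻¹ • (Submodule.orthogonalProjectionOnto U e : V)) : V)‖ := by
  have hLU : ℝ ∙ l ≤ U := (Submodule.span_singleton_le_iff_mem l U).mpr hlU
  rw [← Submodule.orthogonalProjectionOnto_starProjection_of_le hLU e]
  simp only [← Submodule.starProjection_apply]
  exact norm_map_eq_norm_mul_norm_map_inv_norm_smul (ℝ ∙ l).starProjection.toLinearMap _

/-- Multiplicativity of cosines: for a unit vector `e` spanning a line `E` not
contained in `U^⊥`, a unit vector `l` spanning a line `L ⊆ U`, and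
`u = π_U(e)/‖π_U(e)‖` the unit vector spanning `ν(E) = (E + U^⊥) ∩ U`, one has
`cos(E,L) = cos(E,U) · cos(ν(E),L)`, where `cos` of a line with a subspace is the
norm of the orthogonal projection of the spanning unit vector. -/
theorem stmt9 {V : Type*} [NormedAddCommGroup V] [InnerProductSpace ℝ V]
    [FiniteDimensional ℝ V] (U : Submodule ℝ V) (e l : V)
    (he : ‖e‖ = 1) (hl : ‖l‖ = 1) (hlU : l ∈ U)
    (hproj : (Submodule.orthogonalProjectionOnto U e : V) ≠ 0) :
    ‖(Submodule.orthogonalProjectionOnto (ℝ ∙ l) e : V)‖ =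
      ‖(Submodule.orthogonalProjectionOnto U e : V)‖ *
        ‖(Submodule.orthogonalProjectionOnto (ℝ ∙ l)
            (‖(Submodule.orthogonalProjectionOnto U e : V)‖⁻¹ • (Submodule.orthogonalProjectionOnto U e : V)) : V)‖ :=
  stmt9_general U e l hlU
end

section
/- Let μ be a translation-invariant Borel measure on the space of affine hyperplanes in ℝ^n, finite on compacta, and let W ⊂ ℝ^n be an affine subspace of dimension at most n−2. Then the set of affine hyperplanes containing W has μ-measure zero. -/
/-!
Already the hyperplanes through a single point `x` of `W` form a null set. Fix a direction `e`
and look only at hyperplanes transversal to `e`, i.e. with `⟪u, e⟫ ≠ 0`. Translation maps the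
hyperplanes through `x` onto those through `x + t • e`, so all of these families have the same
measure. For distinct `t` they are disjoint, because a transversal hyperplane meets the line
`x + ℝ • e` in only one point. For `t ∈ [0, 1]` they all lie in the compact set of hyperplanes
at distance at most `‖x‖ + ‖e‖` from the origin. Countably many disjoint sets of equal measure
inside a set of finite measure must each have measure zero. The directions of an orthonormal
basis cover all hyperplanes.
-/

open MeasureTheory Metric Set Function
open scoped ENNReal

theorem measure_eq_zero_of_pairwise_disjoint_preimage {α ι : Type*} [MeasurableSpace α]
    [Countable ι] [Infinite ι] {μ : Measure α} {f : ι → α → α}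
    (hf : ∀ i, MeasurePreserving (f i) μ μ) {s K : Set α} (hs : MeasurableSet s)
    (hdisj : Pairwise (Disjoint on (f · ⁻¹' s))) (hK : ∀ i, f i ⁻¹' s ⊆ K)
    (hKfin : μ K ≠ ∞) : μ s = 0 := by
  by_contra hs0
  have hunion : μ (⋃ i, f i ⁻¹' s) = ∞ := by
    rw [measure_iUnion hdisj fun i => (hf i).measurable hs,
      tsum_congr fun i => (hf i).measure_preimage hs.nullMeasurableSet]
    exact ENNReal.tsum_const_eq_top_of_ne_zero hs0
  exact hKfin (top_le_iff.mp (hunion ▸ measure_mono (iUnion_subset hK)))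

namespace AffineHyperplane

variable {E : Type*} [NormedAddCommGroup E] [InnerProductSpace ℝ E]

/-- A hyperplane is a pair `(u, c)`, standing for `{y | ⟪u, y⟫ = c}`. -/
def translate (v : E) (p : sphere (0 : E) 1 × ℝ) : sphere (0 : E) 1 × ℝ :=
  (p.1, p.2 + inner ℝ (p.1 : E) v)

def through (x : E) : Set (sphere (0 : E) 1 × ℝ) :=
  {p | inner ℝ (p.1 : E) x = p.2}

def transversal (e : E) : Set (sphere (0 : E) 1 × ℝ) :=
  {p | inner ℝ (p.1 : E) e ≠ 0}

theorem translate_preimage_through (x y : E) :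
    translate (x - y) ⁻¹' through x = through y := by
  ext p
  simp only [through, translate, mem_preimage, mem_ofPred_eq, inner_sub_right]
  constructor <;> intro h <;> linarith

theorem translate_preimage_transversal (v e : E) :
    translate v ⁻¹' transversal e = transversal e :=
  rfl

theorem isClosed_through (x : E) : IsClosed (through x) :=
  isClosed_eq ((continuous_subtype_val.comp continuous_fst).inner continuous_const)
    continuous_snd

theorem isOpen_transversal (e : E) : IsOpen (transversal e) :=
  isOpen_ne_fun ((continuous_subtype_val.comp continuous_fst).inner continuous_const)
    continuous_const

theorem through_subset_univ_prod_closedBall (x : E) :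
    through x ⊆ univ ×ˢ closedBall 0 ‖x‖ := by
  rintro ⟨u, c⟩ (hc : inner ℝ (u : E) x = c)
  refine ⟨trivial, ?_⟩
  simpa [← hc, norm_eq_of_mem_sphere u] using abs_real_inner_le_norm (u : E) x

theorem disjoint_through_inter_transversal (x e : E) {s t : ℝ} (hst : s ≠ t) :
    Disjoint (through (x + s • e) ∩ transversal e) (through (x + t • e) ∩ transversal e) := by
  refine disjoint_left.mpr fun p ⟨hs, he⟩ ⟨ht, _⟩ => hst ?_
  simp only [through, transversal, mem_ofPred_eq, inner_add_right, real_inner_smul_right] at hs ht he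
  exact mul_right_cancel₀ he (by linarith)

theorem iUnion_transversal_eq_univ {ι : Type*} [Fintype ι] (b : OrthonormalBasis ι ℝ E) :
    ⋃ i, transversal (b i) = univ := by
  refine eq_univ_of_forall fun p => ?_
  have hu : (p.1 : E) ≠ 0 := ne_zero_of_mem_unit_sphere p.1
  obtain ⟨i, hi⟩ : ∃ i, b.repr (p.1 : E) i ≠ 0 := by
    by_contra! h
    exact hu (b.repr.injective (by ext i; simpa using h i))
  refine mem_iUnion.mpr ⟨i, ?_⟩
  rwa [b.repr_apply_apply, real_inner_comm] at hi

variable [MeasurableSpace E] [BorelSpace E] [FiniteDimensional ℝ E]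

theorem measure_through_inter_transversal_eq_zero {μ : Measure (sphere (0 : E) 1 × ℝ)}
    [IsFiniteMeasureOnCompacts μ] (hinv : ∀ v, MeasurePreserving (translate v) μ μ)
    (x e : E) : μ (through x ∩ transversal e) = 0 := by
  set t : ℕ → ℝ := fun k => ((k : ℝ) + 1)⁻¹
  have ht_inj : Injective t := fun k l h => by simpa [t] using h
  have ht_le : ∀ k, ‖t k‖ ≤ 1 := fun k => by
    rw [Real.norm_of_nonneg (by positivity)]
    exact inv_le_one_of_one_le₀ (by simp)
  have hpre : ∀ k, translate (x - (x + t k • e)) ⁻¹' (through x ∩ transversal e) =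
      through (x + t k • e) ∩ transversal e := fun k => by
    rw [preimage_inter, translate_preimage_through, translate_preimage_transversal]
  refine measure_eq_zero_of_pairwise_disjoint_preimage (fun k => hinv (x - (x + t k • e)))
    ((isClosed_through x).measurableSet.inter (isOpen_transversal e).measurableSet)
    (K := univ ×ˢ closedBall 0 (‖x‖ + ‖e‖)) ?_ ?_
    (isCompact_univ.prod (isCompact_closedBall _ _)).measure_ne_top
  · intro k l hkl
    simp only [onFun, hpre]
    exact disjoint_through_inter_transversal x e (ht_inj.ne hkl)
  · intro k
    rw [hpre]
    refine inter_subset_left.trans ((through_subset_univ_prod_closedBall _).trans ?_)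
    refine prod_mono subset_rfl (closedBall_subset_closedBall ?_)
    calc ‖x + t k • e‖ ≤ ‖x‖ + ‖t k‖ * ‖e‖ := (norm_add_le _ _).trans_eq (by rw [norm_smul])
      _ ≤ ‖x‖ + 1 * ‖e‖ := by gcongr; exact ht_le k
      _ = ‖x‖ + ‖e‖ := by rw [one_mul]

theorem measure_through_eq_zero {μ : Measure (sphere (0 : E) 1 × ℝ)}
    [IsFiniteMeasureOnCompacts μ] (hinv : ∀ v, MeasurePreserving (translate v) μ μ)
    (x : E) : μ (through x) = 0 := by
  have hcover : through x ⊆ ⋃ i, through x ∩ transversal (stdOrthonormalBasis ℝ E i) := by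
    rw [← inter_iUnion, iUnion_transversal_eq_univ, inter_univ]
  exact measure_mono_null hcover
    (measure_iUnion_null fun i => measure_through_inter_transversal_eq_zero hinv x _)

end AffineHyperplane

open AffineHyperplane in
theorem stmt12_general {n : ℕ}
    (μ : Measure (Metric.sphere (0 : EuclideanSpace ℝ (Fin n)) 1 × ℝ))
    (hinv : ∀ v : EuclideanSpace ℝ (Fin n),
      MeasurePreserving
        (fun p : Metric.sphere (0 : EuclideanSpace ℝ (Fin n)) 1 × ℝ =>
          (p.1, p.2 + (inner ℝ (p.1 : EuclideanSpace ℝ (Fin n)) v : ℝ))) μ μ)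
    (hfin : ∀ K : Set (Metric.sphere (0 : EuclideanSpace ℝ (Fin n)) 1 × ℝ),
      IsCompact K → μ K < ⊤)
    (W : AffineSubspace ℝ (EuclideanSpace ℝ (Fin n)))
    (hWne : (W : Set (EuclideanSpace ℝ (Fin n))).Nonempty) :
    μ {p | ∀ x ∈ (W : Set (EuclideanSpace ℝ (Fin n))),
        (inner ℝ (p.1 : EuclideanSpace ℝ (Fin n)) x : ℝ) = p.2} = 0 := by
  have : IsFiniteMeasureOnCompacts μ := ⟨hfin⟩
  obtain ⟨x₀, hx₀⟩ := hWne
  exact measure_mono_null (fun p hp => hp x₀ hx₀) (measure_through_eq_zero hinv x₀)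

/-- The space of affine hyperplanes in `ℝ^n`, parametrized (2-to-1) by a unit normal
`u ∈ S^{n-1}` and an offset `c ∈ ℝ`, the hyperplane being `{x | ⟨u,x⟩ = c}`.
Translation by `v ∈ ℝ^n` acts by `(u,c) ↦ (u, c + ⟨u,v⟩)`.

Statement: if `μ` is a translation-invariant Borel measure on the space of affine
hyperplanes, finite on compacta, and `W` is a nonempty affine subspace of dimension
at most `n-2`, then the set of hyperplanes containing `W` has `μ`-measure zero. -/
theorem stmt12 {n : ℕ} (hn : 2 ≤ n)
    (μ : Measure (Metric.sphere (0 : EuclideanSpace ℝ (Fin n)) 1 × ℝ))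
    (hinv : ∀ v : EuclideanSpace ℝ (Fin n),
      MeasurePreserving
        (fun p : Metric.sphere (0 : EuclideanSpace ℝ (Fin n)) 1 × ℝ =>
          (p.1, p.2 + (inner ℝ (p.1 : EuclideanSpace ℝ (Fin n)) v : ℝ))) μ μ)
    (hfin : ∀ K : Set (Metric.sphere (0 : EuclideanSpace ℝ (Fin n)) 1 × ℝ),
      IsCompact K → μ K < ⊤)
    (W : AffineSubspace ℝ (EuclideanSpace ℝ (Fin n)))
    (hWne : (W : Set (EuclideanSpace ℝ (Fin n))).Nonempty)
    (hWdim : Module.finrank ℝ W.direction ≤ n - 2) :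
    μ {p | ∀ x ∈ (W : Set (EuclideanSpace ℝ (Fin n))),
        (inner ℝ (p.1 : EuclideanSpace ℝ (Fin n)) x : ℝ) = p.2} = 0 :=
  stmt12_general μ hinv hfin W hWne
end
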